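/- Let $c_1, c_2, \delta > 0$. If $R_{GR} := 64 c_1^3 c_2 \delta^4 - 96 c_1^2 c_2 \delta^2 - 81 c_1^2 + 18 c_1 c_2 - c_2^2 < 0$, then $R_{GB} := 4 c_1^7 c_2 \delta^4 - 272 c_1^6 c_2^2 \delta^4 + 4632 c_1^5 c_2^3 \delta^4 - 272 c_1^4 c_2^4 \delta^4 + 4 c_1^3 c_2^5 \delta^4 + 264 c_1^6 c_2 \delta^2 - 2464 c_1^5 c_2^2 \delta^2 - 6096 c_1^4 c_2^3 \delta^2 + 96 c_1^3 c_2^4 \delta^2 + 8 c_1^2 c_2^5 \delta^2 - 81 c_1^6 + 342 c_1^5 c_2 - 559 c_1^4 c_2^2 + 436 c_1^3 c_2^3 - 159 c_1^2 c_2^4 + 22 c_1 c_2^5 - c_2^6 < 0$. Moreover, the converse fails: there exist $c_1, c_2, \delta > 0$ with $R_{GB} < 0$ but $R_{GR} \geq 0$. -/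
import Mathlib


noncomputable def RGR (c1 c2 δ : ℝ) : ℝ :=
  64 * c1 ^ 3 * c2 * δ ^ 4 - 96 * c1 ^ 2 * c2 * δ ^ 2 - 81 * c1 ^ 2 + 18 * c1 * c2 - c2 ^ 2

noncomputable def RGB (c1 c2 δ : ℝ) : ℝ :=
  4 * c1 ^ 7 * c2 * δ ^ 4 - 272 * c1 ^ 6 * c2 ^ 2 * δ ^ 4 + 4632 * c1 ^ 5 * c2 ^ 3 * δ ^ 4
  - 272 * c1 ^ 4 * c2 ^ 4 * δ ^ 4 + 4 * c1 ^ 3 * c2 ^ 5 * δ ^ 4 + 264 * c1 ^ 6 * c2 * δ ^ 2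
  - 2464 * c1 ^ 5 * c2 ^ 2 * δ ^ 2 - 6096 * c1 ^ 4 * c2 ^ 3 * δ ^ 2 + 96 * c1 ^ 3 * c2 ^ 4 * δ ^ 2
  + 8 * c1 ^ 2 * c2 ^ 5 * δ ^ 2 - 81 * c1 ^ 6 + 342 * c1 ^ 5 * c2 - 559 * c1 ^ 4 * c2 ^ 2
  + 436 * c1 ^ 3 * c2 ^ 3 - 159 * c1 ^ 2 * c2 ^ 4 + 22 * c1 * c2 ^ 5 - c2 ^ 6

set_option maxHeartbeats 1600000 in
theorem stmt6 :
    (∀ c1 c2 δ : ℝ, 0 < c1 → 0 < c2 → 0 < δ → RGR c1 c2 δ < 0 → RGB c1 c2 δ < 0) ∧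
    (∃ c1 c2 δ : ℝ, 0 < c1 ∧ 0 < c2 ∧ 0 < δ ∧ RGB c1 c2 δ < 0 ∧ RGR c1 c2 δ ≥ 0) := by
  constructor
  · intro c1 c2 δ hc1 hc2 hδ hR
    set s : ℝ := Real.sqrt (c1 * c2) with hsdef
    have hcc : 0 < c1 * c2 := mul_pos hc1 hc2
    have hs2 : s ^ 2 = c1 * c2 := Real.sq_sqrt hcc.le
    have hs : 0 < s := Real.sqrt_pos.mpr hcc
    -- Step A : P < 0
    have hPQ : c1 * c2 * RGR c1 c2 δ =
        (8*c1^2*c2*δ^2 - 6*c1*c2 - (9*c1+c2)*s) * (8*c1^2*c2*δ^2 - 6*c1*c2 + (9*c1+c2)*s) := by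
      unfold RGR
      linear_combination ((9*c1+c2)^2) * hs2
    have hRn : c1 * c2 * RGR c1 c2 δ < 0 := mul_neg_of_pos_of_neg hcc hR
    have h9s : 0 < (9*c1+c2)*s := mul_pos (by linarith) hs
    have hP : 8*c1^2*c2*δ^2 - 6*c1*c2 - (9*c1+c2)*s < 0 := by
      by_contra h
      push_neg at h
      have hQ : (0:ℝ) ≤ 8*c1^2*c2*δ^2 - 6*c1*c2 + (9*c1+c2)*s := by linarith
      linarith [hPQ, hRn, mul_nonneg h hQ]
    -- Step B : b + s*a ≥ 0
    have ha : 0 < 54*c1^2 - 44*c1*c2 + 22*c2^2 := by nlinarith [sq_nonneg (c1 - c2), sq_nonneg c1]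
    have hsa : 0 < s * (54*c1^2 - 44*c1*c2 + 22*c2^2) := mul_pos hs ha
    have hba : 0 ≤ 27*c1^3 - 99*c1^2*c2 + 37*c1*c2^2 + 3*c2^3
        + s * (54*c1^2 - 44*c1*c2 + 22*c2^2) := by
      rcases le_or_gt 0 (27*c1^3 - 99*c1^2*c2 + 37*c1*c2^2 + 3*c2^3) with hb | hb
      · linarith
      · have h91 : c2 < 9*c1 := by nlinarith
        have h19 : c1 < 9*c2 := by nlinarith
        have hsq : (s * (54*c1^2 - 44*c1*c2 + 22*c2^2))^2
            - (27*c1^3 - 99*c1^2*c2 + 37*c1*c2^2 + 3*c2^3)^2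
            = (9*c1 - c2)^3 * (c1 - c2)^2 * (9*c2 - c1) := by
          linear_combination ((54*c1^2 - 44*c1*c2 + 22*c2^2)^2) * hs2
        have hrhs : 0 ≤ (9*c1 - c2)^3 * (c1 - c2)^2 * (9*c2 - c1) := by
          have h1 : 0 < 9*c1 - c2 := by linarith
          have h2 : 0 < 9*c2 - c1 := by linarith
          exact mul_nonneg (mul_nonneg (pow_pos h1 3).le (sq_nonneg _)) h2.le
        nlinarith [hsq, hrhs, hsa, hb]
    -- Step C : Fp < 0
    have ht : 0 < s * (c1 + 6*s + c2)^2 := mul_pos hs (pow_pos (by linarith) 2)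
    have hW : s * (c1 + 6*s + c2)^2 * (6*c1*c2 + (9*c1+c2)*s)
        - 4*(c1*c2)*(9*c1^3 + 42*s*c1^2 + 79*c1^2*c2 + 76*s*c1*c2 + 39*c1*c2^2 + 10*s*c2^2 + c2^3)
        = -(c1*c2) * ((27*c1^3 - 99*c1^2*c2 + 37*c1*c2^2 + 3*c2^3)
            + s * (54*c1^2 - 44*c1*c2 + 22*c2^2)) := by
      linear_combination (36*c2*s^2 + 12*c2^2*s + c2^3 + 324*c1*s^2 + 336*c1*c2*s + 119*c1*c2^2
        + 108*c1^2*s + 415*c1^2*c2 + 9*c1^3) * hs2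
    have hFp : 8*s*c1*(c1 + 6*s + c2)^2*δ^2
        - 4*(9*c1^3 + 42*s*c1^2 + 79*c1^2*c2 + 76*s*c1*c2 + 39*c1*c2^2 + 10*s*c2^2 + c2^3) < 0 := by
      have hlt : s * (c1 + 6*s + c2)^2 * (8*c1^2*c2*δ^2)
          < s * (c1 + 6*s + c2)^2 * (6*c1*c2 + (9*c1+c2)*s) := by
        apply mul_lt_mul_of_pos_left _ ht
        linarith
      have hWle : 0 ≤ (c1*c2) * ((27*c1^3 - 99*c1^2*c2 + 37*c1*c2^2 + 3*c2^3)
          + s * (54*c1^2 - 44*c1*c2 + 22*c2^2)) := mul_nonneg hcc.le hba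
      have hkey : c1 * c2 * (8*s*c1*(c1 + 6*s + c2)^2*δ^2
          - 4*(9*c1^3 + 42*s*c1^2 + 79*c1^2*c2 + 76*s*c1*c2 + 39*c1*c2^2 + 10*s*c2^2 + c2^3)) < 0 := by
        have heq : c1 * c2 * (8*s*c1*(c1 + 6*s + c2)^2*δ^2
            - 4*(9*c1^3 + 42*s*c1^2 + 79*c1^2*c2 + 76*s*c1*c2 + 39*c1*c2^2 + 10*s*c2^2 + c2^3))
            = s * (c1 + 6*s + c2)^2 * (8*c1^2*c2*δ^2)
              - 4*(c1*c2)*(9*c1^3 + 42*s*c1^2 + 79*c1^2*c2 + 76*s*c1*c2 + 39*c1*c2^2 + 10*s*c2^2 + c2^3) := by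
          ring
        rw [heq]
        linarith [hlt, hW, hWle]
      by_contra h
      push_neg at h
      linarith [mul_nonneg hcc.le h, hkey]
    -- Step D : Fm > 0
    have hXY : ((9*c1^3 + 79*c1^2*c2 + 39*c1*c2^2 + c2^3) - s*(42*c1^2 + 76*c1*c2 + 10*c2^2))
        * ((9*c1^3 + 79*c1^2*c2 + 39*c1*c2^2 + c2^3) + s*(42*c1^2 + 76*c1*c2 + 10*c2^2))
        = (c1 - c2)^4 * (9*c1 - c2)^2 := by
      linear_combination (-(42*c1^2 + 76*c1*c2 + 10*c2^2)^2) * hs2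
    have hXYpos : 0 < (9*c1^3 + 79*c1^2*c2 + 39*c1*c2^2 + c2^3)
        + s*(42*c1^2 + 76*c1*c2 + 10*c2^2) := by
      nlinarith [pow_pos hc1 3, pow_pos hc2 3, mul_pos (mul_pos hc1 hc1) hc2,
        mul_pos hc1 (mul_pos hc2 hc2), mul_pos hs (mul_pos hc1 hc1),
        mul_pos hs (mul_pos hc1 hc2), mul_pos hs (mul_pos hc2 hc2)]
    have hXmY : 0 ≤ (9*c1^3 + 79*c1^2*c2 + 39*c1*c2^2 + c2^3)
        - s*(42*c1^2 + 76*c1*c2 + 10*c2^2) := by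
      by_contra h
      push_neg at h
      have hneg := mul_neg_of_neg_of_pos h hXYpos
      rw [hXY] at hneg
      nlinarith [sq_nonneg ((c1 - c2)^2 * (9*c1 - c2))]
    have hFm : 0 < 8*s*c1*(c1 - 6*s + c2)^2*δ^2
        + 4*((9*c1^3 + 79*c1^2*c2 + 39*c1*c2^2 + c2^3) - s*(42*c1^2 + 76*c1*c2 + 10*c2^2)) := by
      rcases eq_or_ne (c1 - 6*s + c2) 0 with he | he
      · -- then (c1+c2)^2 = 36 c1 c2, so c1 ≠ c2 and 9c1 ≠ c2, hence X - sY > 0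
        have h6 : (c1 + c2)^2 = 36 * (c1*c2) := by
          have : c1 + c2 = 6*s := by linarith [he]
          rw [this]; linear_combination 36 * hs2
        have hne1 : c1 - c2 ≠ 0 := by
          intro hq
          have : c1 = c2 := by linarith
          rw [this] at h6; nlinarith
        have hne2 : 9*c1 - c2 ≠ 0 := by
          intro hq
          have : c2 = 9*c1 := by linarith
          rw [this] at h6; nlinarith
        have hne3 : (c1 - c2)^2 * (9*c1 - c2) ≠ 0 := mul_ne_zero (pow_ne_zero 2 hne1) hne2
        have hposS : 0 < ((c1 - c2)^2 * (9*c1 - c2))^2 := pow_two_pos_of_ne_zero hne3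
        have hpos : 0 < (c1 - c2)^4 * (9*c1 - c2)^2 := by nlinarith [hposS]
        have hXgt : 0 < (9*c1^3 + 79*c1^2*c2 + 39*c1*c2^2 + c2^3)
            - s*(42*c1^2 + 76*c1*c2 + 10*c2^2) := by
          by_contra h
          push_neg at h
          have hm := mul_nonpos_of_nonpos_of_nonneg h hXYpos.le
          rw [hXY] at hm
          linarith [hpos]
        have h8 : 0 ≤ 8*s*c1*(c1 - 6*s + c2)^2*δ^2 :=
          mul_nonneg (mul_nonneg (mul_nonneg (by linarith) hc1.le) (sq_nonneg _)) (sq_nonneg _)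
        linarith [hXgt, h8]
      · have hsq : 0 < (c1 - 6*s + c2)^2 := pow_two_pos_of_ne_zero he
        have h8 : 0 < 8*s*c1*(c1 - 6*s + c2)^2*δ^2 :=
          mul_pos (mul_pos (mul_pos (by linarith) hc1) hsq) (pow_pos hδ 2)
        linarith [hXmY]
    -- Step E : 16 RGB = Fp * Fm
    have hid : 16 * RGB c1 c2 δ =
        (8*s*c1*(c1 + 6*s + c2)^2*δ^2
          - 4*(9*c1^3 + 42*s*c1^2 + 79*c1^2*c2 + 76*s*c1*c2 + 39*c1*c2^2 + 10*s*c2^2 + c2^3))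
        * (8*s*c1*(c1 - 6*s + c2)^2*δ^2
          + 4*((9*c1^3 + 79*c1^2*c2 + 39*c1*c2^2 + c2^3) - s*(42*c1^2 + 76*c1*c2 + 10*c2^2))) := by
      unfold RGB
      linear_combination ((-1600)*c2^4 + 23040*c1*c2^2*δ^2*s^2 - 24320*c1*c2^3 - 128*c1*c2^4*δ^2
        - 82944*c1^2*δ^4*s^4 + 175104*c1^2*c2*δ^2*s^2 - 105856*c1^2*c2^2 + 4608*c1^2*c2^2*δ^4*s^2
        - 1536*c1^2*c2^3*δ^2 - 64*c1^2*c2^4*δ^4 + 96768*c1^3*δ^2*s^2 - 102144*c1^3*c2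
        - 73728*c1^3*c2*δ^4*s^2 + 97536*c1^3*c2^2*δ^2 + 4352*c1^3*c2^3*δ^4 - 28224*c1^4
        + 4608*c1^4*δ^4*s^2 + 39424*c1^4*c2*δ^2 - 74112*c1^4*c2^2*δ^4 - 4224*c1^5*δ^2
        + 4352*c1^5*c2*δ^4 - 64*c1^6*δ^4) * hs2
    linarith [mul_neg_of_neg_of_pos hFp hFm, hid]
  · refine ⟨4, 1, 9/10, by norm_num, by norm_num, by norm_num, ?_, ?_⟩
    · unfold RGB; norm_num
    · unfold RGR; norm_num
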